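/- arXiv:2502.17578 — 5 statements merged into one kernel-verified Lean document; each statement's English description precedes it below -/
import Mathlib

section
/- Let f : [0,1] → ℝ be a probability density function (f is nonnegative and integrable with ∫₀¹ f(p) dp = 1). Suppose there exist constants b > 0, C > 0, θ > 0, K > 0 and δ > 0 such that for all 0 < p < δ, |f(p) − C·p^(b−1)| ≤ K·p^(b−1+θ). Then the integral I_k := ∫₀¹ (1−p)^k f(p) dp satisfies I_k = C·Γ(b)·k^(−b) + O(k^(−b−min(1,θ))) as k → ∞; that is, there exist constants M > 0 and k₀ such that for all k ≥ k₀, |I_k − C·Γ(b)·k^(−b)| ≤ M·k^(−b−min(1,θ)). -/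
open MeasureTheory Real Set Filter Asymptotics

/-!
Near `0` the weight `(1 - p)^k` behaves like `exp (-k p)`, and
`∫₀^∞ p^(b-1) exp (-k p) dp = Γ(b) k^(-b)`. Split `[0, 1]` at a small `c`. On `[c, 1]` the
weight is at most `exp (-k c)`, which is negligible. On `[0, c]`, replacing `f` by `C p^(b-1)`
costs at most `K ∫ p^(b+θ-1) exp (-k p) = O(k^(-b-θ))`; replacing `(1 - p)^k` by `exp (-k p)`
costs at most `2k ∫ p^(b+1) exp (-k p) = O(k^(-b-1))`, because
`0 ≤ exp (-k p) - (1 - p)^k ≤ 2 k p² exp (-k p)` for `p ≤ 1/2`; and completing `∫₀^c` to the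
Gamma integral costs `O(exp (-k c))` again.
-/

lemma one_sub_pow_le_exp_neg_mul {p : ℝ} (hp : p ≤ 1) (k : ℕ) :
    (1 - p) ^ k ≤ exp (-(k * p)) :=
  calc (1 - p) ^ k ≤ exp (-p) ^ k := pow_le_pow_left₀ (by linarith) (one_sub_le_exp_neg p) k
    _ = exp (-(k * p)) := by rw [← exp_nat_mul]; ring_nf

lemma exp_neg_mul_sub_one_sub_pow_le {p : ℝ} (hp : p ≤ 1 / 2) (k : ℕ) :
    exp (-(k * p)) - (1 - p) ^ k ≤ 2 * k * p ^ 2 * exp (-(k * p)) := by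
  -- `(1 - p) exp (p + 2p²) ≥ (1 - p)(1 + p + 2p²) = 1 + p² (1 - 2p) ≥ 1`
  have hbase : exp (-(p + 2 * p ^ 2)) ≤ 1 - p := by
    rw [exp_neg, inv_le_iff_one_le_mul₀ (exp_pos _)]
    nlinarith [add_one_le_exp (p + 2 * p ^ 2), sq_nonneg p]
  have hpow : exp (-(k * p)) * exp (-(k * (2 * p ^ 2))) ≤ (1 - p) ^ k :=
    calc _ = exp (-(p + 2 * p ^ 2)) ^ k := by rw [← exp_add, ← exp_nat_mul]; ring_nf
      _ ≤ (1 - p) ^ k := pow_le_pow_left₀ (exp_nonneg _) hbase k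
  nlinarith [mul_le_mul_of_nonneg_left (one_sub_le_exp_neg (k * (2 * p ^ 2)))
    (exp_pos (-(k * p))).le]

lemma integral_Ioi_rpow_mul_exp_neg_mul {s k : ℝ} (hs : 0 < s) (hk : 0 < k) :
    ∫ t in Ioi 0, t ^ (s - 1) * exp (-(k * t)) = Gamma s * k ^ (-s) := by
  rw [integral_rpow_mul_exp_neg_mul_Ioi hs hk, one_div, inv_rpow hk.le, rpow_neg hk.le, mul_comm]

lemma integrableOn_Ioi_rpow_mul_exp_neg_mul {s k : ℝ} (hs : 0 < s) (hk : 0 < k) :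
    IntegrableOn (fun t => t ^ (s - 1) * exp (-(k * t))) (Ioi 0) := by
  simpa only [rpow_one, neg_mul] using
    integrableOn_rpow_mul_exp_neg_mul_rpow (by linarith : -1 < s - 1) one_pos hk

lemma abs_intervalIntegral_le_Gamma_mul_rpow_neg {h : ℝ → ℝ} {s k c A : ℝ} (hs : 0 < s)
    (hk : 0 < k) (hc : 0 ≤ c) (hA : 0 ≤ A)
    (hh : ∀ t ∈ Ioc 0 c, |h t| ≤ A * (t ^ (s - 1) * exp (-(k * t)))) :
    |∫ t in 0..c, h t| ≤ A * Gamma s * k ^ (-s) := by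
  have hint := integrableOn_Ioi_rpow_mul_exp_neg_mul hs hk
  have hle : ∫ t in 0..c, t ^ (s - 1) * exp (-(k * t)) ≤ Gamma s * k ^ (-s) := by
    rw [← integral_Ioi_rpow_mul_exp_neg_mul hs hk, intervalIntegral.integral_of_le hc]
    refine setIntegral_mono_set hint ?_ Ioc_subset_Ioi_self.eventuallyLE
    filter_upwards [ae_restrict_mem measurableSet_Ioi] with t (ht : 0 < t)
    positivity
  calc |∫ t in 0..c, h t| ≤ ∫ t in 0..c, A * (t ^ (s - 1) * exp (-(k * t))) :=
        intervalIntegral.norm_integral_le_of_norm_le (f := h) hc (ae_of_all _ hh)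
          (((intervalIntegrable_iff_integrableOn_Ioc_of_le hc).2
            (hint.mono_set Ioc_subset_Ioi_self)).const_mul A)
    _ ≤ A * Gamma s * k ^ (-s) := by
        rw [intervalIntegral.integral_const_mul, mul_assoc]
        exact mul_le_mul_of_nonneg_left hle hA

lemma setIntegral_Ioi_rpow_mul_exp_neg_mul_le {s c : ℝ} (hs : 0 < s) (hc : 0 ≤ c) {k : ℝ}
    (hk : 1 ≤ k) :
    ∫ t in Ioi c, t ^ (s - 1) * exp (-(k * t)) ≤ exp c * Gamma s * exp (-(k * c)) := by
  have hint : IntegrableOn (fun t => t ^ (s - 1) * exp (-t)) (Ioi 0) := by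
    simpa only [one_mul] using integrableOn_Ioi_rpow_mul_exp_neg_mul hs one_pos
  calc ∫ t in Ioi c, t ^ (s - 1) * exp (-(k * t))
      ≤ ∫ t in Ioi c, exp c * exp (-(k * c)) * (t ^ (s - 1) * exp (-t)) := by
        refine setIntegral_mono_on
          ((integrableOn_Ioi_rpow_mul_exp_neg_mul hs (by linarith)).mono_set (Ioi_subset_Ioi hc))
          ((hint.mono_set (Ioi_subset_Ioi hc)).const_mul _) measurableSet_Ioi fun t ht => ?_
        have ht0 : 0 ≤ t ^ (s - 1) := rpow_nonneg (hc.trans (le_of_lt ht)) _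
        rw [← exp_add, mul_left_comm, ← exp_add]
        -- the exponents differ by `(k - 1)(t - c) ≥ 0`
        exact mul_le_mul_of_nonneg_left (exp_le_exp.2 (by nlinarith [mem_Ioi.1 ht])) ht0
    _ ≤ exp c * exp (-(k * c)) * ∫ t in Ioi 0, t ^ (s - 1) * exp (-t) := by
        rw [integral_const_mul]
        refine mul_le_mul_of_nonneg_left (setIntegral_mono_set hint ?_
          (Ioi_subset_Ioi hc).eventuallyLE) (by positivity)
        filter_upwards [ae_restrict_mem measurableSet_Ioi] with t (ht : 0 < t)
        positivity
    _ = exp c * Gamma s * exp (-(k * c)) := by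
        rw [Gamma_eq_integral hs]
        simp only [mul_comm (exp (-_))]
        ring

lemma abs_intervalIntegral_one_sub_pow_mul_le {f : ℝ → ℝ} {c : ℝ} (hc : c ≤ 1)
    (hf : IntervalIntegrable f volume c 1) (k : ℕ) :
    |∫ p in c..1, (1 - p) ^ k * f p| ≤ (∫ p in c..1, |f p|) * exp (-(k * c)) := by
  rw [mul_comm, ← intervalIntegral.integral_const_mul]
  refine intervalIntegral.norm_integral_le_of_norm_le (f := fun p => (1 - p) ^ k * f p) hc
    (ae_of_all _ fun p hp => ?_) (hf.abs.const_mul _)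
  rw [norm_mul, Real.norm_eq_abs, abs_of_nonneg (pow_nonneg (by linarith [hp.2]) k)]
  exact mul_le_mul_of_nonneg_right ((pow_le_pow_left₀ (by linarith [hp.2])
    (by linarith [hp.1]) k).trans (one_sub_pow_le_exp_neg_mul hc k)) (abs_nonneg _)

lemma abs_intervalIntegral_rpow_mul_one_sub_pow_sub_exp_le {b c : ℝ} (hb : 0 < b) (hc : 0 ≤ c)
    (hc2 : c ≤ 1 / 2) {k : ℕ} (hk : 0 < k) :
    |∫ p in 0..c, p ^ (b - 1) * ((1 - p) ^ k - exp (-(k * p)))|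
      ≤ 2 * Gamma (b + 2) * (k : ℝ) ^ (-(b + 1)) := by
  have hk' : (0 : ℝ) < k := Nat.cast_pos.2 hk
  calc _ ≤ 2 * k * Gamma (b + 2) * (k : ℝ) ^ (-(b + 2)) := by
        refine abs_intervalIntegral_le_Gamma_mul_rpow_neg (by linarith) hk' hc (by positivity)
          fun p ⟨hp0, hpc⟩ => ?_
        have hdiff := exp_neg_mul_sub_one_sub_pow_le (hpc.trans hc2) k
        have hsign := one_sub_pow_le_exp_neg_mul (by linarith : p ≤ 1) k
        rw [abs_mul, abs_of_nonneg (rpow_nonneg hp0.le _), abs_sub_comm,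
          abs_of_nonneg (sub_nonneg.2 hsign), show b + 2 - 1 = (b - 1) + 2 by ring,
          rpow_add hp0, rpow_two]
        calc _ ≤ p ^ (b - 1) * (2 * k * p ^ 2 * exp (-(k * p))) :=
              mul_le_mul_of_nonneg_left hdiff (rpow_nonneg hp0.le _)
          _ = _ := by ring
    _ = 2 * Gamma (b + 2) * (k : ℝ) ^ (-(b + 1)) := by
        rw [show -(b + 1) = 1 + -(b + 2) by ring, rpow_add hk', rpow_one]; ring

lemma integral_one_sub_pow_mul_sub_eq {f : ℝ → ℝ} {c : ℝ}
    (hf0c : IntervalIntegrable f volume 0 c) (hfc1 : IntervalIntegrable f volume c 1) {b C : ℝ}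
    (hb : 0 < b) (hc0 : 0 ≤ c) {k : ℕ} (hk : 0 < k) :
    (∫ p in 0..1, (1 - p) ^ k * f p) - C * Gamma b * (k : ℝ) ^ (-b) =
      (∫ p in 0..c, (1 - p) ^ k * (f p - C * p ^ (b - 1))) + (∫ p in c..1, (1 - p) ^ k * f p)
        + C * (∫ p in 0..c, p ^ (b - 1) * ((1 - p) ^ k - exp (-(k * p))))
        - C * ∫ p in Ioi c, p ^ (b - 1) * exp (-(k * p)) := by
  have hk' : (0 : ℝ) < k := Nat.cast_pos.2 hk
  have hweight (a a' : ℝ) : ContinuousOn (fun p : ℝ => (1 - p) ^ k) (uIcc a a') := by fun_prop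
  have hexp : ContinuousOn (fun p : ℝ => exp (-(k * p))) (uIcc 0 c) := by fun_prop
  have hpow : IntervalIntegrable (fun p : ℝ => p ^ (b - 1)) volume 0 c :=
    intervalIntegral.intervalIntegrable_rpow' (by linarith)
  have hint := integrableOn_Ioi_rpow_mul_exp_neg_mul hb hk'
  have hGamma : Gamma b * (k : ℝ) ^ (-b) = (∫ p in 0..c, p ^ (b - 1) * exp (-(k * p)))
      + ∫ p in Ioi c, p ^ (b - 1) * exp (-(k * p)) := by
    rw [← integral_Ioi_rpow_mul_exp_neg_mul hb hk', ← Ioc_union_Ioi_eq_Ioi hc0,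
      setIntegral_union (Ioc_disjoint_Ioi le_rfl) measurableSet_Ioi
        (hint.mono_set Ioc_subset_Ioi_self) (hint.mono_set (Ioi_subset_Ioi hc0)),
      intervalIntegral.integral_of_le hc0]
  have hsplit : ∫ p in 0..c, (1 - p) ^ k * f p
      = (∫ p in 0..c, (1 - p) ^ k * (f p - C * p ^ (b - 1)))
        + (∫ p in 0..c, C * (p ^ (b - 1) * ((1 - p) ^ k - exp (-(k * p)))))
        + ∫ p in 0..c, C * (p ^ (b - 1) * exp (-(k * p))) := by
    have hA := (hf0c.sub (hpow.const_mul C)).continuousOn_mul (hweight 0 c)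
    have hD : IntervalIntegrable
        (fun p => C * (p ^ (b - 1) * ((1 - p) ^ k - exp (-(k * p))))) volume 0 c :=
      (hpow.mul_continuousOn ((hweight 0 c).sub hexp)).const_mul C
    have hZ := (hpow.mul_continuousOn hexp).const_mul C
    rw [← intervalIntegral.integral_add hA hD, ← intervalIntegral.integral_add (hA.add hD) hZ]
    exact intervalIntegral.integral_congr fun p _ => by ring
  rw [← intervalIntegral.integral_add_adjacent_intervals (hf0c.continuousOn_mul (hweight 0 c))
    (hfc1.continuousOn_mul (hweight c 1)), hsplit, intervalIntegral.integral_const_mul,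
    intervalIntegral.integral_const_mul, mul_assoc, hGamma]
  ring

lemma isBigO_of_abs_le_mul_rpow_neg {u : ℕ → ℝ} {A s t : ℝ} (hts : t ≤ s)
    (hu : ∀ᶠ k in atTop, |u k| ≤ A * (k : ℝ) ^ (-s)) :
    u =O[atTop] fun k => (k : ℝ) ^ (-t) := by
  refine (IsBigO.of_norm_eventuallyLE (f := u) (g := fun k : ℕ => A * (k : ℝ) ^ (-s)) hu).trans
    (IsBigO.const_mul_left (IsBigO.of_norm_eventuallyLE ?_) A)
  filter_upwards [eventually_ge_atTop 1] with k hk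
  rw [Real.norm_of_nonneg (rpow_nonneg k.cast_nonneg _)]
  exact rpow_le_rpow_of_exponent_le (Nat.one_le_cast.2 hk) (neg_le_neg hts)

lemma isBigO_of_abs_le_mul_exp_neg {u : ℕ → ℝ} {A a : ℝ} (ha : 0 < a)
    (hu : ∀ᶠ k in atTop, |u k| ≤ A * exp (-(k * a))) (s : ℝ) :
    u =O[atTop] fun k => (k : ℝ) ^ s := by
  refine (IsBigO.of_norm_eventuallyLE (f := u) (g := fun k : ℕ => A * exp (-(k * a))) hu).trans
    (IsBigO.const_mul_left ?_ A)
  simpa only [Function.comp_def, neg_mul, mul_comm a] using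
    (isLittleO_exp_neg_mul_rpow_atTop ha s).isBigO.comp_tendsto tendsto_natCast_atTop_atTop

lemma isBigO_integral_one_sub_pow_mul_sub_Gamma {f : ℝ → ℝ}
    (hf : IntervalIntegrable f volume 0 1) {b C θ K c : ℝ} (hb : 0 < b) (hθ : 0 < θ)
    (hK : 0 ≤ K) (hc0 : 0 < c) (hc : c ≤ 1 / 2)
    (htail : ∀ p ∈ Ioc 0 c, |f p - C * p ^ (b - 1)| ≤ K * p ^ (b - 1 + θ)) :
    (fun k : ℕ => (∫ p in 0..1, (1 - p) ^ k * f p) - C * Gamma b * (k : ℝ) ^ (-b))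
      =O[atTop] fun k => (k : ℝ) ^ (-(b + min 1 θ)) := by
  have hc1 : c ≤ 1 := by linarith
  have hf0c : IntervalIntegrable f volume 0 c := hf.mono_set <| by
    rw [uIcc_of_le hc0.le, uIcc_of_le zero_le_one]; exact Icc_subset_Icc le_rfl hc1
  have hfc1 : IntervalIntegrable f volume c 1 := hf.mono_set <| by
    rw [uIcc_of_le hc1, uIcc_of_le zero_le_one]; exact Icc_subset_Icc hc0.le le_rfl
  have hnear : (fun k : ℕ => ∫ p in 0..c, (1 - p) ^ k * (f p - C * p ^ (b - 1)))
      =O[atTop] fun k => (k : ℝ) ^ (-(b + min 1 θ)) := by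
    refine isBigO_of_abs_le_mul_rpow_neg (A := K * Gamma (b + θ))
      (add_le_add_right (min_le_right 1 θ) b) ?_
    filter_upwards [eventually_gt_atTop 0] with k hk
    refine abs_intervalIntegral_le_Gamma_mul_rpow_neg (by linarith) (Nat.cast_pos.2 hk) hc0.le hK
      fun p hp => ?_
    rw [abs_mul, abs_of_nonneg (pow_nonneg (by linarith [hp.2]) k)]
    calc _ ≤ exp (-(k * p)) * (K * p ^ (b - 1 + θ)) :=
          mul_le_mul (one_sub_pow_le_exp_neg_mul (by linarith [hp.2]) k) (htail p hp)
            (abs_nonneg _) (exp_nonneg _)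
      _ = K * (p ^ (b + θ - 1) * exp (-(k * p))) := by
          rw [show b + θ - 1 = b - 1 + θ by ring]; ring
  have hfar : (fun k : ℕ => ∫ p in c..1, (1 - p) ^ k * f p)
      =O[atTop] fun k => (k : ℝ) ^ (-(b + min 1 θ)) :=
    isBigO_of_abs_le_mul_exp_neg hc0
      (Eventually.of_forall (abs_intervalIntegral_one_sub_pow_mul_le hc1 hfc1)) _
  have hweight : (fun k : ℕ => ∫ p in 0..c, p ^ (b - 1) * ((1 - p) ^ k - exp (-(k * p))))
      =O[atTop] fun k => (k : ℝ) ^ (-(b + min 1 θ)) :=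
    isBigO_of_abs_le_mul_rpow_neg (add_le_add_right (min_le_left 1 θ) b)
      ((eventually_gt_atTop 0).mono fun k hk =>
        abs_intervalIntegral_rpow_mul_one_sub_pow_sub_exp_le hb hc0.le hc hk)
  have hGammaTail : (fun k : ℕ => ∫ p in Ioi c, p ^ (b - 1) * exp (-(k * p)))
      =O[atTop] fun k => (k : ℝ) ^ (-(b + min 1 θ)) := by
    refine isBigO_of_abs_le_mul_exp_neg (A := exp c * Gamma b) hc0 ?_ _
    filter_upwards [eventually_ge_atTop 1] with k hk
    rw [abs_of_nonneg (setIntegral_nonneg measurableSet_Ioi fun p hp =>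
      mul_nonneg (rpow_nonneg (hc0.le.trans (le_of_lt hp)) _) (exp_nonneg _))]
    exact setIntegral_Ioi_rpow_mul_exp_neg_mul_le hb hc0.le (Nat.one_le_cast.2 hk)
  refine (((hnear.add hfar).add (hweight.const_mul_left C)).sub
    (hGammaTail.const_mul_left C)).congr' ?_ EventuallyEq.rfl
  filter_upwards [eventually_gt_atTop 0] with k hk
  exact (integral_one_sub_pow_mul_sub_eq hf0c hfc1 hb hc0.le hk).symm

theorem integral_pow_density_asymptotic_general
    (f : ℝ → ℝ)
    (hf_int : IntervalIntegrable f volume 0 1)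
    (b C θ K δ : ℝ)
    (hb : 0 < b) (hθ : 0 < θ) (hK : 0 < K) (hδ : 0 < δ)
    (hf_tail : ∀ p : ℝ, 0 < p → p < δ → |f p - C * p ^ (b - 1)| ≤ K * p ^ (b - 1 + θ)) :
    ∃ M > (0:ℝ), ∃ k₀ : ℕ, ∀ k : ℕ, k₀ ≤ k →
      |(∫ p in (0:ℝ)..1, (1 - p) ^ k * f p) - C * Real.Gamma b * (k : ℝ) ^ (-b)|
        ≤ M * (k : ℝ) ^ (-(b + min 1 θ)) := by
  obtain ⟨c, hc0, hc, hcδ⟩ : ∃ c : ℝ, 0 < c ∧ c ≤ 1 / 2 ∧ c < δ :=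
    ⟨min (δ / 2) (1 / 2), by positivity, min_le_right _ _,
      (min_le_left _ _).trans_lt (by linarith)⟩
  obtain ⟨M, hM, hbound⟩ := (isBigO_integral_one_sub_pow_mul_sub_Gamma hf_int hb hθ hK.le hc0
    hc fun p hp => hf_tail p hp.1 (hp.2.trans_lt hcδ)).exists_pos
  obtain ⟨k₀, hk₀⟩ := eventually_atTop.1 hbound.bound
  refine ⟨M, hM, k₀, fun k hk => ?_⟩
  simpa only [Real.norm_eq_abs, abs_of_nonneg (rpow_nonneg k.cast_nonneg _)] using hk₀ k hk

/-- **Sufficiency of a power-law left tail (integral form).**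
If a probability density `f` on `[0,1]` satisfies
`f(p) = C·p^(b-1) + O(p^(b-1+θ))` near `0`, then
`I_k = ∫₀¹ (1-p)^k f(p) dp = C·Γ(b)·k^(-b) + O(k^(-b-min(1,θ)))` as `k → ∞`. -/
theorem integral_pow_density_asymptotic
    (f : ℝ → ℝ)
    (hf_nonneg : ∀ p ∈ Set.Icc (0:ℝ) 1, 0 ≤ f p)
    (hf_int : IntervalIntegrable f volume 0 1)
    (hf_prob : (∫ p in (0:ℝ)..1, f p) = 1)
    (b C θ K δ : ℝ)
    (hb : 0 < b) (hC : 0 < C) (hθ : 0 < θ) (hK : 0 < K) (hδ : 0 < δ)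
    (hf_tail : ∀ p : ℝ, 0 < p → p < δ → |f p - C * p ^ (b - 1)| ≤ K * p ^ (b - 1 + θ)) :
    ∃ M > (0:ℝ), ∃ k₀ : ℕ, ∀ k : ℕ, k₀ ≤ k →
      |(∫ p in (0:ℝ)..1, (1 - p) ^ k * f p) - C * Real.Gamma b * (k : ℝ) ^ (-b)|
        ≤ M * (k : ℝ) ^ (-(b + min 1 θ)) :=
  integral_pow_density_asymptotic_general f hf_int b C θ K δ hb hθ hK hδ hf_tail
end

section
/- Let f : [0,1] → ℝ be a probability density function (f is nonnegative and integrable with ∫₀¹ f(p) dp = 1). Suppose there exist constants b > 0, C > 0, θ > 0, K > 0 and δ > 0 such that for all 0 < p < δ, |f(p) − C·p^(b−1)| ≤ K·p^(b−1+θ). Then −log(pass_D@k) is asymptotically equivalent to C·Γ(b)·k^(−b) as k → ∞; that is, (−log(pass_D@k)) / (C·Γ(b)·k^(−b)) → 1 as k → ∞. -/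
/-! Split `∫₀¹ (1-p)^k f(p) dp` at a small `d`. On `[d,1]` the weight `(1-p)^k ≤ (1-d)^k` decays
geometrically. On `[0,d]` replace `f` by `C p^(b-1)`: the main term `k^b ∫ (1-p)^k p^(b-1)` tends
to `Γ(b)` by Euler's limit formula (the Beta integral `B(b, k+1)` is `GammaSeq b k / k^b`), while
the error, bounded by `K p^(b-1+θ)`, is `O(k^(-b-θ))`. So `A_k := 1 - pass_D@k ~ C Γ(b) k^(-b)`
tends to `0`, and `-log(1 - A_k) ~ A_k`. -/

open MeasureTheory Real Filter Set Topology

theorem tendsto_natCast_rpow_mul_pow_of_lt_one (b : ℝ) {r : ℝ} (hr0 : 0 ≤ r) (hr1 : r < 1) :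
    Tendsto (fun k : ℕ => (k : ℝ) ^ b * r ^ k) atTop (𝓝 0) := by
  refine squeeze_zero' (Eventually.of_forall fun k => by positivity) ?_
    (tendsto_pow_const_mul_const_pow_of_lt_one ⌈b⌉₊ hr0 hr1)
  filter_upwards [eventually_ge_atTop 1] with k hk
  gcongr
  calc (k : ℝ) ^ b ≤ (k : ℝ) ^ (⌈b⌉₊ : ℝ) :=
        rpow_le_rpow_of_exponent_le (by exact_mod_cast hk) (Nat.le_ceil b)
    _ = (k : ℝ) ^ ⌈b⌉₊ := rpow_natCast _ _

theorem intervalIntegrable_one_sub_pow_mul_rpow (k : ℕ) {s : ℝ} (hs : 0 < s) (a c : ℝ) :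
    IntervalIntegrable (fun p => (1 - p) ^ k * p ^ (s - 1)) volume a c :=
  (intervalIntegral.intervalIntegrable_rpow' (by linarith)).continuousOn_mul
    (by fun_prop)

theorem tendsto_rpow_mul_integral_beta {s : ℝ} (hs : 0 < s) :
    Tendsto (fun k : ℕ => (k : ℝ) ^ s * ∫ p in (0 : ℝ)..1, (1 - p) ^ k * p ^ (s - 1))
      atTop (𝓝 (Gamma s)) := by
  have hGammaSeq (k : ℕ) : (((k : ℝ) ^ s * ∫ p in (0 : ℝ)..1, (1 - p) ^ k * p ^ (s - 1) : ℝ) : ℂ)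
      = Complex.GammaSeq s k := by
    rw [Complex.GammaSeq_eq_betaIntegral_of_re_pos (by simpa using hs), Complex.betaIntegral,
      Complex.ofReal_mul, Complex.ofReal_cpow k.cast_nonneg, ← intervalIntegral.integral_ofReal]
    push_cast
    congr 1
    refine intervalIntegral.integral_congr fun p hp => ?_
    rw [uIcc_of_le zero_le_one] at hp
    simp [Complex.ofReal_cpow hp.1, mul_comm]
  simpa [Function.comp_def, ← hGammaSeq, Complex.Gamma_ofReal] using
    (Complex.continuous_re.tendsto _).comp (Complex.GammaSeq_tendsto_Gamma s)

theorem tendsto_rpow_mul_integral_one_sub_pow_mul_zero_of_pos (b : ℝ) {g : ℝ → ℝ} {d : ℝ}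
    (hd0 : 0 < d) (hd1 : d ≤ 1) (hg : IntervalIntegrable g volume d 1) :
    Tendsto (fun k : ℕ => (k : ℝ) ^ b * ∫ p in d..1, (1 - p) ^ k * g p) atTop (𝓝 0) := by
  have hlim := (tendsto_natCast_rpow_mul_pow_of_lt_one b (r := 1 - d) (by linarith)
    (by linarith)).mul_const (∫ p in d..1, |g p|)
  rw [zero_mul] at hlim
  refine squeeze_zero_norm (fun k => ?_) hlim
  have hbound : ‖∫ p in d..1, (1 - p) ^ k * g p‖ ≤ (1 - d) ^ k * ∫ p in d..1, |g p| := by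
    rw [← intervalIntegral.integral_const_mul]
    refine intervalIntegral.norm_integral_le_of_norm_le hd1 (Eventually.of_forall fun p hp => ?_)
      (hg.abs.const_mul _)
    rw [norm_mul, norm_pow, norm_eq_abs, norm_eq_abs, abs_of_nonneg (by linarith [hp.2])]
    gcongr
    · linarith [hp.2]
    · linarith [hp.1]
  rw [norm_mul, norm_of_nonneg (by positivity), mul_assoc]
  exact mul_le_mul_of_nonneg_left hbound (by positivity)

theorem tendsto_rpow_mul_integral_beta_of_le_one {s d : ℝ} (hs : 0 < s)
    (hd0 : 0 < d) (hd1 : d ≤ 1) :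
    Tendsto (fun k : ℕ => (k : ℝ) ^ s * ∫ p in (0 : ℝ)..d, (1 - p) ^ k * p ^ (s - 1))
      atTop (𝓝 (Gamma s)) := by
  have hlim := (tendsto_rpow_mul_integral_beta hs).sub
    (tendsto_rpow_mul_integral_one_sub_pow_mul_zero_of_pos s (g := fun p => p ^ (s - 1)) hd0 hd1
      (intervalIntegral.intervalIntegrable_rpow' (by linarith)))
  rw [sub_zero] at hlim
  refine hlim.congr fun k => ?_
  rw [← mul_sub, ← intervalIntegral.integral_add_adjacent_intervals
    (intervalIntegrable_one_sub_pow_mul_rpow k hs 0 d)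
    (intervalIntegrable_one_sub_pow_mul_rpow k hs d 1), add_sub_cancel_right]

theorem tendsto_rpow_mul_integral_one_sub_pow_mul_zero_of_abs_le {s θ K d : ℝ} {g : ℝ → ℝ}
    (hs : 0 < s) (hθ : 0 < θ) (hd0 : 0 < d) (hd1 : d ≤ 1)
    (hg : ∀ p ∈ Ioc 0 d, |g p| ≤ K * p ^ (s - 1 + θ)) :
    Tendsto (fun k : ℕ => (k : ℝ) ^ s * ∫ p in (0 : ℝ)..d, (1 - p) ^ k * g p) atTop (𝓝 0) := by
  have hsθ : 0 < s + θ := by linarith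
  have hlim := ((tendsto_rpow_neg_atTop hθ).comp tendsto_natCast_atTop_atTop).mul
    ((tendsto_rpow_mul_integral_beta_of_le_one hsθ hd0 hd1).const_mul K)
  rw [zero_mul] at hlim
  refine squeeze_zero_norm (fun k => ?_) hlim
  have hbound : ‖∫ p in (0 : ℝ)..d, (1 - p) ^ k * g p‖
      ≤ K * ∫ p in (0 : ℝ)..d, (1 - p) ^ k * p ^ (s + θ - 1) := by
    rw [← intervalIntegral.integral_const_mul]
    refine intervalIntegral.norm_integral_le_of_norm_le hd0.le
      (Eventually.of_forall fun p hp => ?_)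
      ((intervalIntegrable_one_sub_pow_mul_rpow k hsθ 0 d).const_mul K)
    have h1p : 0 ≤ 1 - p := by linarith [hp.2]
    rw [norm_mul, norm_pow, norm_eq_abs, norm_eq_abs, abs_of_nonneg h1p, mul_left_comm,
      add_sub_right_comm]
    exact mul_le_mul_of_nonneg_left (hg p hp) (pow_nonneg h1p k)
  have hsplit : (k : ℝ) ^ s = (k : ℝ) ^ (-θ) * (k : ℝ) ^ (s + θ) := by
    rw [← rpow_add' k.cast_nonneg (by linarith)]
    ring_nf
  rw [norm_mul, norm_of_nonneg (by positivity), hsplit, Function.comp_apply, mul_assoc,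
    mul_left_comm K]
  gcongr

theorem tendsto_rpow_mul_integral_one_sub_pow_mul_of_power_law {f : ℝ → ℝ} {b C θ K d : ℝ}
    (hf : IntervalIntegrable f volume 0 1) (hb : 0 < b) (hθ : 0 < θ) (hd0 : 0 < d)
    (hd1 : d ≤ 1) (hf_tail : ∀ p ∈ Ioc 0 d, |f p - C * p ^ (b - 1)| ≤ K * p ^ (b - 1 + θ)) :
    Tendsto (fun k : ℕ => (k : ℝ) ^ b * ∫ p in (0 : ℝ)..1, (1 - p) ^ k * f p)
      atTop (𝓝 (C * Gamma b)) := by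
  have hd : d ∈ uIcc (0 : ℝ) 1 := mem_uIcc_of_le hd0.le hd1
  have hf_d1 : IntervalIntegrable f volume d 1 := hf.mono_set (uIcc_subset_uIcc_right hd)
  have hlim := ((tendsto_rpow_mul_integral_one_sub_pow_mul_zero_of_abs_le hb hθ hd0 hd1
    hf_tail).add ((tendsto_rpow_mul_integral_beta_of_le_one hb hd0 hd1).const_mul C)).add
    (tendsto_rpow_mul_integral_one_sub_pow_mul_zero_of_pos b hd0 hd1 hf_d1)
  rw [zero_add, add_zero] at hlim
  refine hlim.congr fun k => ?_
  have hF : IntervalIntegrable (fun p => (1 - p) ^ k * f p) volume 0 1 :=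
    hf.continuousOn_mul (by fun_prop)
  have hsub : ∫ p in (0 : ℝ)..d, (1 - p) ^ k * (f p - C * p ^ (b - 1))
      = (∫ p in (0 : ℝ)..d, (1 - p) ^ k * f p)
        - C * ∫ p in (0 : ℝ)..d, (1 - p) ^ k * p ^ (b - 1) := by
    rw [← intervalIntegral.integral_const_mul, ← intervalIntegral.integral_sub
      (hF.mono_set (uIcc_subset_uIcc_left hd))
      ((intervalIntegrable_one_sub_pow_mul_rpow k hb 0 d).const_mul C)]
    congr 1 with p
    ring
  rw [← intervalIntegral.integral_add_adjacent_intervals (hF.mono_set (uIcc_subset_uIcc_left hd))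
    (hF.mono_set (uIcc_subset_uIcc_right hd)), hsub]
  ring

theorem tendsto_log_one_sub_div_self :
    Tendsto (fun x : ℝ => log (1 - x) / x) (𝓝[≠] 0) (𝓝 (-1)) := by
  have hderiv : HasDerivAt (fun x : ℝ => log (1 - x)) (-1) 0 := by
    simpa using ((hasDerivAt_id (0 : ℝ)).const_sub 1).log (by norm_num)
  refine (hasDerivAt_iff_tendsto_slope.mp hderiv).congr fun x => ?_
  simp [slope_def_field]

theorem tendsto_neg_log_one_sub_div_of_tendsto_rpow_mul {A : ℕ → ℝ} {L b : ℝ} (hL : L ≠ 0)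
    (hb : 0 < b) (hA : Tendsto (fun k : ℕ => (k : ℝ) ^ b * A k) atTop (𝓝 L)) :
    Tendsto (fun k : ℕ => -log (1 - A k) / (L * (k : ℝ) ^ (-b))) atTop (𝓝 1) := by
  have hA0 : Tendsto A atTop (𝓝[≠] 0) := by
    refine tendsto_nhdsWithin_iff.mpr ⟨?_, ?_⟩
    · have hlim := hA.mul ((tendsto_rpow_neg_atTop hb).comp tendsto_natCast_atTop_atTop)
      rw [mul_zero] at hlim
      refine hlim.congr' ?_
      filter_upwards [eventually_ne_atTop 0] with k hk
      rw [Function.comp_apply, mul_right_comm, ← rpow_add (by positivity), add_neg_cancel,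
        rpow_zero, one_mul]
    · filter_upwards [hA.eventually_ne hL] with k hk
      exact right_ne_zero_of_mul hk
  have hlim := ((tendsto_log_one_sub_div_self.comp hA0).neg).mul (hA.div_const L)
  rw [neg_neg, div_self hL, one_mul] at hlim
  refine hlim.congr' ?_
  filter_upwards [eventually_ne_atTop 0, hA.eventually_ne hL] with k hk hkA
  rw [Function.comp_apply, rpow_neg k.cast_nonneg]
  have hAk : A k ≠ 0 := right_ne_zero_of_mul hkA
  field_simp

theorem neg_log_pass_asymptotic_power_law_general
    (f : ℝ → ℝ)
    (hf_int : IntervalIntegrable f volume 0 1)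
    (b C θ K δ : ℝ)
    (hb : 0 < b) (hC : 0 < C) (hθ : 0 < θ) (hδ : 0 < δ)
    (hf_tail : ∀ p : ℝ, 0 < p → p < δ → |f p - C * p ^ (b - 1)| ≤ K * p ^ (b - 1 + θ)) :
    Tendsto
      (fun k : ℕ =>
        (-Real.log (1 - ∫ p in (0:ℝ)..1, (1 - p) ^ k * f p)) /
          (C * Real.Gamma b * (k : ℝ) ^ (-b)))
      atTop (nhds 1) := by
  obtain ⟨d, hd0, hdδ, hd1⟩ : ∃ d : ℝ, 0 < d ∧ d < δ ∧ d ≤ 1 :=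
    ⟨min (δ / 2) 1, by positivity, (min_le_left _ _).trans_lt (half_lt_self hδ), min_le_right _ _⟩
  refine tendsto_neg_log_one_sub_div_of_tendsto_rpow_mul
    (mul_pos hC (Gamma_pos_of_pos hb)).ne' hb ?_
  exact tendsto_rpow_mul_integral_one_sub_pow_mul_of_power_law hf_int hb hθ hd0 hd1
    fun p hp => hf_tail p hp.1 (hp.2.trans_lt hdδ)

/-- **Sufficiency of a power-law left tail in the distribution of single-attempt
success rates.** If a probability density `f` on `[0,1]` satisfies
`f(p) = C·p^(b-1) + O(p^(b-1+θ))` near `0`, then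
`-log(pass_D@k) ~ C·Γ(b)·k^(-b)` as `k → ∞`, where
`pass_D@k = 1 - ∫₀¹ (1-p)^k f(p) dp`. -/
theorem neg_log_pass_asymptotic_power_law
    (f : ℝ → ℝ)
    (hf_nonneg : ∀ p ∈ Set.Icc (0:ℝ) 1, 0 ≤ f p)
    (hf_int : IntervalIntegrable f volume 0 1)
    (hf_prob : (∫ p in (0:ℝ)..1, f p) = 1)
    (b C θ K δ : ℝ)
    (hb : 0 < b) (hC : 0 < C) (hθ : 0 < θ) (hK : 0 < K) (hδ : 0 < δ)
    (hf_tail : ∀ p : ℝ, 0 < p → p < δ → |f p - C * p ^ (b - 1)| ≤ K * p ^ (b - 1 + θ)) :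
    Tendsto
      (fun k : ℕ =>
        (-Real.log (1 - ∫ p in (0:ℝ)..1, (1 - p) ^ k * f p)) /
          (C * Real.Gamma b * (k : ℝ) ^ (-b)))
      atTop (nhds 1) :=
  neg_log_pass_asymptotic_power_law_general f hf_int b C θ K δ hb hC hθ hδ hf_tail
end

section
/- Let 0 < α < β ≤ 1 and let pass_D@k := 1 − (1/(β−α))·∫_α^β (1−p)^k dp be the aggregate success rate when per-attempt success probabilities are uniform on [α, β]. Then −log(pass_D@k) is asymptotically equivalent to (1−α)^(k+1) / ((β−α)·(k+1)) as k → ∞; in particular −log(pass_D@k) decays exponentially fast in k, faster than any power law. -/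
/-!
Write `r = 1 - α` and `s = 1 - β`, so `0 ≤ s < r < 1`. The failure probability
`x_k = (1/(β-α)) ∫_α^β (1-p)^k dp = (r^(k+1) - s^(k+1)) / ((β-α)(k+1))` tends to `0`, and
`-log (1 - x) ~ x` as `x → 0`. Since `s < r`, the term `s^(k+1)` is negligible against
`r^(k+1)`, so `-log (pass_D@k) ~ x_k ~ r^(k+1) / ((β-α)(k+1))`.
-/

open MeasureTheory Real Filter Asymptotics Topology

theorem isEquivalent_neg_log_one_sub : (fun x : ℝ => -log (1 - x)) ~[𝓝 0] id := by
  have hderiv : HasDerivAt (fun x : ℝ => -log (1 - x)) 1 0 := by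
    have := (((hasDerivAt_id (0 : ℝ)).const_sub 1).log (by norm_num)).neg
    simp only [id, sub_zero, div_one, neg_neg] at this
    exact this
  have := hasDerivAt_iff_isLittleO.mp hderiv
  simp only [sub_zero, neg_zero, log_one, smul_eq_mul, mul_one] at this
  exact this

theorem isEquivalent_pow_sub_pow {r s : ℝ} (hs : 0 ≤ s) (hsr : s < r) :
    (fun n : ℕ => r ^ n - s ^ n) ~[atTop] fun n => r ^ n := by
  simpa [IsEquivalent, Pi.sub_def] using (isLittleO_pow_pow_of_lt_left hs hsr).neg_left

theorem integral_one_sub_pow (a b : ℝ) (k : ℕ) :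
    ∫ p in a..b, (1 - p) ^ k = ((1 - a) ^ (k + 1) - (1 - b) ^ (k + 1)) / (k + 1) := by
  rw [intervalIntegral.integral_comp_sub_left (fun x : ℝ => x ^ k) 1, integral_pow]

theorem tendsto_pow_succ_div_mul_succ {r c : ℝ} (hr : |r| < 1) (hc : 0 < c) :
    Tendsto (fun k : ℕ => r ^ (k + 1) / (c * (k + 1))) atTop (𝓝 0) := by
  refine ((tendsto_pow_atTop_nhds_zero_of_abs_lt_one hr).comp
    (tendsto_add_atTop_nat 1)).div_atTop ?_
  exact (tendsto_natCast_atTop_atTop.atTop_add tendsto_const_nhds).const_mul_atTop hc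

/-- **Uniform distribution with `α > 0`: exponential decay.** If per-attempt
success probabilities are uniform on `[α, β]` with `0 < α < β ≤ 1`, then
`-log(pass_D@k) ~ (1-α)^(k+1) / ((β-α)·(k+1))` as `k → ∞`; in particular the
negative log aggregate success rate decays exponentially fast in `k`. -/
theorem neg_log_pass_uniform_pos_left_endpoint
    (α β : ℝ) (hα : 0 < α) (hαβ : α < β) (hβ : β ≤ 1) :
    Tendsto
      (fun k : ℕ =>
        (-Real.log (1 - (1 / (β - α)) * ∫ p in α..β, (1 - p) ^ k)) /
          ((1 - α) ^ (k + 1) / ((β - α) * (k + 1))))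
      atTop (nhds 1) := by
  have hβα : 0 < β - α := by linarith
  set b : ℕ → ℝ := fun k => (1 - α) ^ (k + 1) / ((β - α) * (k + 1))
  have hfail : ∀ k : ℕ, (1 / (β - α)) * ∫ p in α..β, (1 - p) ^ k =
      ((1 - α) ^ (k + 1) - (1 - β) ^ (k + 1)) / ((β - α) * (k + 1)) := fun k => by
    rw [integral_one_sub_pow]; field_simp
  have hfail_equiv : (fun k : ℕ => (1 / (β - α)) * ∫ p in α..β, (1 - p) ^ k) ~[atTop] b := by
    simp only [hfail]
    exact ((isEquivalent_pow_sub_pow (by linarith) (by linarith)).comp_tendsto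
      (tendsto_add_atTop_nat 1)).div IsEquivalent.refl
  have hfail_zero := hfail_equiv.symm.tendsto_nhds
    (tendsto_pow_succ_div_mul_succ (abs_lt.mpr ⟨by linarith, by linarith⟩) hβα)
  have hb : ∀ᶠ k in atTop, b k ≠ 0 := Eventually.of_forall fun k =>
    (div_pos (pow_pos (by linarith) _) (by positivity)).ne'
  exact (isEquivalent_iff_tendsto_one hb).mp
    ((isEquivalent_neg_log_one_sub.comp_tendsto hfail_zero).trans hfail_equiv)
end

section
/- Let f : [0,1] → ℝ be a probability density function (nonnegative, integrable, ∫₀¹ f(p) dp = 1) that is continuous at 0 with f(0) = c > 0. Then −log(pass_D@k) = c·k^(−1) + o(k^(−1)) as k → ∞, where pass_D@k := 1 − ∫₀¹ (1−p)^k f(p) dp; that is, any continuous density with nonzero constant density at p = 0 yields power-law scaling of the negative log aggregate success rate with exponent 1 and leading coefficient c. -/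
/-!
The weight `(1 - p) ^ k`, renormalised by `∫₀¹ (1 - p) ^ k dp = 1 / (k + 1)`, concentrates at `p = 0`,
so `k · ∫₀¹ (1 - p) ^ k f(p) dp → f 0 = c` (Laplace's peak-function principle). Writing
`pass_D@k = 1 - I_k`, we have `I_k → 0` and `-log (1 - x) = x + o(x)`, hence `k · (-log pass_D@k) → c`.
-/

open MeasureTheory Real Filter Topology

theorem integral_one_sub_pow_s12 (n : ℕ) : ∫ x in (0:ℝ)..1, (1 - x) ^ n = ((n : ℝ) + 1)⁻¹ := by
  simp [intervalIntegral.integral_comp_sub_left (fun x : ℝ => x ^ n), integral_pow]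

theorem tendsto_succ_smul_integral_one_sub_pow_smul {E : Type*} [NormedAddCommGroup E]
    [NormedSpace ℝ E] [CompleteSpace E] {g : ℝ → E} (hg : IntervalIntegrable g volume 0 1)
    (hg₀ : ContinuousWithinAt g (Set.Icc 0 1) 0) :
    Tendsto (fun n : ℕ => ((n : ℝ) + 1) • ∫ x in (0:ℝ)..1, (1 - x) ^ n • g x) atTop
      (𝓝 (g 0)) := by
  have hpeak := tendsto_setIntegral_pow_smul_of_unique_maximum_of_isCompact_of_integrableOn
    (μ := volume) (x₀ := 0) (c := fun x => 1 - x) isCompact_Icc (by fun_prop)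
    (fun y hy hy₀ => by linarith [lt_of_le_of_ne hy.1 (Ne.symm hy₀)])
    (fun x hx => by linarith [hx.2]) (by norm_num)
    (by rw [interior_Icc, closure_Ioo zero_ne_one]; exact Set.left_mem_Icc.2 zero_le_one)
    ((integrableOn_Icc_iff_integrableOn_Ioc (μ := volume)).mpr hg.1) hg₀
  simpa only [integral_Icc_eq_integral_Ioc, ← intervalIntegral.integral_of_le zero_le_one,
    integral_one_sub_pow_s12, inv_inv] using hpeak

theorem HasDerivAt.tendsto_mul_comp {ι : Type*} {l : Filter ι} {h : ℝ → ℝ} {h' : ℝ}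
    (hh : HasDerivAt h h' 0) (h₀ : h 0 = 0) {a b : ι → ℝ} {L : ℝ}
    (ha : Tendsto a l (𝓝 0)) (hab : Tendsto (fun i => b i * a i) l (𝓝 L)) :
    Tendsto (fun i => b i * h (a i)) l (𝓝 (L * h')) := by
  -- `h x = x * dslope h 0 x`, and `dslope h 0` is continuous at `0` with value `h'`.
  have hslope : Tendsto (dslope h 0) (𝓝 0) (𝓝 h') := by
    simpa [dslope_same, hh.deriv] using
      (continuousAt_dslope_same.2 hh.differentiableAt).tendsto
  refine (hab.mul (hslope.comp ha)).congr fun i => ?_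
  have := sub_smul_dslope h 0 (a i)
  simp only [sub_zero, smul_eq_mul, h₀] at this
  simp [mul_assoc, this]

theorem hasDerivAt_neg_log_one_sub_zero : HasDerivAt (fun x : ℝ => -log (1 - x)) 1 0 := by
  simpa using (((hasDerivAt_id (0:ℝ)).const_sub 1).log (by norm_num)).fun_neg

theorem tendsto_zero_of_tendsto_succ_mul {u : ℕ → ℝ} {L : ℝ}
    (h : Tendsto (fun n : ℕ => ((n : ℝ) + 1) * u n) atTop (𝓝 L)) :
    Tendsto u atTop (𝓝 0) := by
  have hinv : Tendsto (fun n : ℕ => ((n : ℝ) + 1)⁻¹) atTop (𝓝 0) :=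
    tendsto_inv_atTop_zero.comp (tendsto_atTop_add_const_right _ 1 tendsto_natCast_atTop_atTop)
  simpa using (hinv.mul h).congr fun n => by field_simp

theorem neg_log_pass_continuous_density_at_zero_general
    (f : ℝ → ℝ) (c : ℝ)
    (hf_int : IntervalIntegrable f volume 0 1)
    (hf_cont : ContinuousWithinAt f (Set.Icc (0:ℝ) 1) 0)
    (hf_zero : f 0 = c) :
    Tendsto
      (fun k : ℕ =>
        ((-Real.log (1 - ∫ p in (0:ℝ)..1, (1 - p) ^ k * f p))
            - c * (k : ℝ)⁻¹) * (k : ℝ))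
      atTop (nhds 0) := by
  set I : ℕ → ℝ := fun k => ∫ p in (0:ℝ)..1, (1 - p) ^ k * f p
  have hpeak : Tendsto (fun k : ℕ => ((k : ℝ) + 1) * I k) atTop (𝓝 c) := by
    simpa [hf_zero] using tendsto_succ_smul_integral_one_sub_pow_smul hf_int hf_cont
  have hI : Tendsto I atTop (𝓝 0) := tendsto_zero_of_tendsto_succ_mul hpeak
  have hkI : Tendsto (fun k : ℕ => (k : ℝ) * I k) atTop (𝓝 c) := by
    simpa using (hpeak.sub hI).congr fun k => by ring
  have hlog := hasDerivAt_neg_log_one_sub_zero.tendsto_mul_comp (by simp) hI hkI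
  rw [mul_one] at hlog
  refine (sub_self c ▸ hlog.sub_const c).congr' ?_
  filter_upwards [eventually_ne_atTop 0] with k hk
  field_simp
  ring

/-- **Any continuous density with nonzero constant density at `0`: power law
with exponent 1.** If a probability density `f` on `[0,1]` is continuous at `0`
(from within `[0,1]`) with `f(0) = c > 0`, then
`-log(pass_D@k) = c·k^(-1) + o(k^(-1))` as `k → ∞`. -/
theorem neg_log_pass_continuous_density_at_zero
    (f : ℝ → ℝ) (c : ℝ)
    (hf_nonneg : ∀ p ∈ Set.Icc (0:ℝ) 1, 0 ≤ f p)
    (hf_int : IntervalIntegrable f volume 0 1)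
    (hf_prob : (∫ p in (0:ℝ)..1, f p) = 1)
    (hf_cont : ContinuousWithinAt f (Set.Icc (0:ℝ) 1) 0)
    (hf_zero : f 0 = c) (hc : 0 < c) :
    Tendsto
      (fun k : ℕ =>
        ((-Real.log (1 - ∫ p in (0:ℝ)..1, (1 - p) ^ k * f p))
            - c * (k : ℝ)⁻¹) * (k : ℝ))
      atTop (nhds 0) :=
  neg_log_pass_continuous_density_at_zero_general f c hf_int hf_cont hf_zero
end

section
/- Fix natural numbers n ≥ k ≥ 1 and p ∈ [0,1], and let C be a binomial random variable with parameters n and p (the number of successes among n independent attempts, each succeeding with probability p). Then the estimator 1 − binom(n−C, k)/binom(n, k) (with the convention that binom(m, k) = 0 when m < k) is an unbiased estimator of 1 − (1−p)^k; that is, E[1 − binom(n−C, k)/binom(n, k)] = 1 − (1−p)^k. -/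
open Finset

/-
Writing `q = 1 - p`, the identity `binom(n, c) binom(n - c, k) = binom(n, k) binom(n - k, c)`
(both count the ways to pick disjoint sets of sizes `c` and `k` from `n` elements) turns the
expectation of `binom(n - C, k)` into `binom(n, k) q^k` times a binomial expansion of
`(p + q)^(n - k) = 1`. Since the weights `binom(n, c) p^c q^(n - c)` also sum to `(p + q)^n = 1`,
the expectation of the estimator is `1 - q^k`.
-/

theorem Nat.choose_mul_choose_sub_comm (n k c : ℕ) :
    n.choose c * (n - c).choose k = n.choose k * (n - k).choose c := by
  have hc := Nat.choose_mul (n := n) (Nat.le_add_right c k)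
  have hk := Nat.choose_mul (n := n) (Nat.le_add_left k c)
  simp only [Nat.add_sub_cancel, Nat.add_sub_cancel_left] at hc hk
  rw [← hc, ← hk, Nat.choose_symm_add]

section CommSemiring

variable {R : Type*} [CommSemiring R] (x y : R)

theorem sum_range_choose_mul_pow_mul_pow (n : ℕ) :
    ∑ c ∈ range (n + 1), (n.choose c : R) * x ^ c * y ^ (n - c) = (x + y) ^ n := by
  rw [add_pow]
  exact sum_congr rfl fun c _ => by ring

theorem sum_range_choose_mul_choose_sub_mul_pow_mul_pow {n k : ℕ} (hkn : k ≤ n) :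
    ∑ c ∈ range (n + 1), (n.choose c * (n - c).choose k : R) * x ^ c * y ^ (n - c)
      = n.choose k * y ^ k * (x + y) ^ (n - k) := by
  calc ∑ c ∈ range (n + 1), (n.choose c * (n - c).choose k : R) * x ^ c * y ^ (n - c)
      = ∑ c ∈ range (n + 1), (n.choose k : R) * ((n - k).choose c * x ^ c * y ^ (n - c)) := by
        refine sum_congr rfl fun c _ => ?_
        rw [← Nat.cast_mul, Nat.choose_mul_choose_sub_comm, Nat.cast_mul, mul_assoc, mul_assoc,
          mul_assoc]
    _ = ∑ c ∈ range (n - k + 1),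
          (n.choose k : R) * ((n - k).choose c * x ^ c * y ^ (n - c)) := by
        refine (sum_subset (range_subset_range.2 (by omega)) fun c _ hc => ?_).symm
        rw [mem_range, not_lt] at hc
        rw [Nat.choose_eq_zero_of_lt (by omega : n - k < c)]
        simp
    _ = n.choose k * y ^ k *
          ∑ c ∈ range (n - k + 1), ((n - k).choose c : R) * x ^ c * y ^ (n - k - c) := by
        rw [mul_sum]
        refine sum_congr rfl fun c hc => ?_
        rw [show n - c = k + (n - k - c) by grind, pow_add]
        ring
    _ = n.choose k * y ^ k * (x + y) ^ (n - k) := by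
        rw [sum_range_choose_mul_pow_mul_pow]

end CommSemiring

theorem chen_estimator_unbiased_general
    (n k : ℕ) (hkn : k ≤ n)
    (p : ℝ) :
    ∑ c ∈ Finset.range (n + 1),
        (n.choose c : ℝ) * p ^ c * (1 - p) ^ (n - c) *
          (1 - ((n - c).choose k : ℝ) / (n.choose k : ℝ))
      = 1 - (1 - p) ^ k := by
  have hchoose : (n.choose k : ℝ) ≠ 0 := by exact_mod_cast (Nat.choose_pos hkn).ne'
  calc _ = ∑ c ∈ range (n + 1), (n.choose c : ℝ) * p ^ c * (1 - p) ^ (n - c)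
          - (∑ c ∈ range (n + 1),
              (n.choose c * (n - c).choose k : ℝ) * p ^ c * (1 - p) ^ (n - c)) / n.choose k := by
        rw [sum_div, ← sum_sub_distrib]
        exact sum_congr rfl fun c _ => by ring
    _ = 1 - (1 - p) ^ k := by
        rw [sum_range_choose_mul_pow_mul_pow,
          sum_range_choose_mul_choose_sub_mul_pow_mul_pow _ _ hkn, add_sub_cancel, one_pow,
          one_pow, mul_one]
        field_simp

/-- **Unbiasedness of the Chen et al. (2021) `pass@k` estimator.** If `C` is
binomial with parameters `n` and `p` (so `P(C = c) = binom(n,c)·p^c·(1-p)^(n-c)`),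
and `n ≥ k ≥ 1`, then
`E[1 - binom(n-C, k)/binom(n, k)] = 1 - (1-p)^k`
(with the convention `binom(m, k) = 0` for `m < k`, which is `Nat.choose`'s). -/
theorem chen_estimator_unbiased
    (n k : ℕ) (hk : 1 ≤ k) (hkn : k ≤ n)
    (p : ℝ) (hp : p ∈ Set.Icc (0:ℝ) 1) :
    ∑ c ∈ Finset.range (n + 1),
        (n.choose c : ℝ) * p ^ c * (1 - p) ^ (n - c) *
          (1 - ((n - c).choose k : ℝ) / (n.choose k : ℝ))
      = 1 - (1 - p) ^ k :=
  chen_estimator_unbiased_general n k hkn p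
end
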